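/- arXiv:2510.10204 — 3 statements merged into one kernel-verified Lean document; each statement's English description precedes it below -/
import Mathlib

section
/- Quasi-periodicity of the generalized Appell function in ν: for every ℓ_d ∈ Λ_d one has Φ_{μ,ν+ℓ_d}(τ,u,v,{d_r}) = e^{2πi B(ℓ_d,u)} · Φ_{μ,ν}(τ, u, v+ℓ_d τ, {d_r}). -/
open scoped BigOperators Real
open Complex

/-- The complex bilinear form `B(x,y) = xᵀ 𝐀 y` attached to an integer matrix `𝐀`,
extended bilinearly to `ℂ^N`. -/
noncomputable def bilC {N : ℕ} (A : Matrix (Fin N) (Fin N) ℤ) (x y : Fin N → ℂ) : ℂ :=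
  ∑ i, ∑ j, x i * (A i j : ℂ) * y j

/-- The real bilinear form `B(x,y) = xᵀ 𝐀 y`. -/
noncomputable def bilR {N : ℕ} (A : Matrix (Fin N) (Fin N) ℤ) (x y : Fin N → ℝ) : ℝ :=
  ∑ i, ∑ j, x i * (A i j : ℝ) * y j

/-- The generalized Appell function `Φ_{μ,ν}(τ,u,v,{d_r})`:
`e^{2πi B(ν,u)} · Σ_{k ∈ ℤ^N} e^{πiτ Q(k+μ−ν) + 2πiτ B(ν,k+μ−ν) + 2πi B(v,k+μ−ν)}
  / ∏_{r=1}^M (1 − e^{2πi B(d_r,u)} e^{2πiτ B(d_r,k+μ−ν)})`. -/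
noncomputable def appellPhi {N M : ℕ} (A : Matrix (Fin N) (Fin N) ℤ)
    (d : Fin M → Fin N → ℤ) (τ : ℂ) (u v : Fin N → ℂ) (μ ν : Fin N → ℝ) : ℂ :=
  Complex.exp (2 * (π : ℂ) * I * bilC A (fun i => (ν i : ℂ)) u) *
  ∑' k : Fin N → ℤ,
    Complex.exp ((π : ℂ) * I * τ *
        bilC A (fun i => (k i : ℂ) + (μ i : ℂ) - (ν i : ℂ))
               (fun i => (k i : ℂ) + (μ i : ℂ) - (ν i : ℂ))
      + 2 * (π : ℂ) * I * τ *
        bilC A (fun i => (ν i : ℂ)) (fun i => (k i : ℂ) + (μ i : ℂ) - (ν i : ℂ))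
      + 2 * (π : ℂ) * I *
        bilC A v (fun i => (k i : ℂ) + (μ i : ℂ) - (ν i : ℂ))) /
    ∏ r, (1 - Complex.exp (2 * (π : ℂ) * I * bilC A (fun i => (d r i : ℂ)) u) *
      Complex.exp (2 * (π : ℂ) * I * τ *
        bilC A (fun i => (d r i : ℂ)) (fun i => (k i : ℂ) + (μ i : ℂ) - (ν i : ℂ))))

/- Shifting `ν` by a lattice vector `ℓ` and reindexing the sum by `k ↦ k + ℓ` leaves
`k + μ - ν`, and hence every denominator, unchanged; the only effect is the extra term
`2πiτ B(ℓ, k+μ-ν)` in the exponent of the numerator, which is exactly the shift `v ↦ v + ℓτ`,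
and the factor `e^{2πi B(ℓ,u)}` split off from the prefactor. -/

lemma bilC_add_left {N : ℕ} (A : Matrix (Fin N) (Fin N) ℤ) (x x' y : Fin N → ℂ) :
    bilC A (fun i => x i + x' i) y = bilC A x y + bilC A x' y := by
  simp only [bilC, ← Finset.sum_add_distrib]
  exact Finset.sum_congr rfl fun i _ => Finset.sum_congr rfl fun j _ => by ring

lemma bilC_mul_left {N : ℕ} (A : Matrix (Fin N) (Fin N) ℤ) (c : ℂ) (x y : Fin N → ℂ) :
    bilC A (fun i => x i * c) y = c * bilC A x y := by
  simp only [bilC, Finset.mul_sum]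
  exact Finset.sum_congr rfl fun i _ => Finset.sum_congr rfl fun j _ => by ring

section Appell

variable {N M : ℕ} (A : Matrix (Fin N) (Fin N) ℤ) (d : Fin M → Fin N → ℤ) (τ : ℂ)
  (u v : Fin N → ℂ)

/-- The summand of `appellPhi` at `m = k + μ - ν`, with `ν` allowed complex. -/
noncomputable def appellSummand (ν m : Fin N → ℂ) : ℂ :=
  Complex.exp ((π : ℂ) * I * τ * bilC A m m + 2 * (π : ℂ) * I * τ * bilC A ν m
      + 2 * (π : ℂ) * I * bilC A v m) /
    ∏ r, (1 - Complex.exp (2 * (π : ℂ) * I * bilC A (fun i => (d r i : ℂ)) u) *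
      Complex.exp (2 * (π : ℂ) * I * τ * bilC A (fun i => (d r i : ℂ)) m))

lemma appellPhi_eq_tsum_appellSummand (μ ν : Fin N → ℝ) :
    appellPhi A d τ u v μ ν =
      Complex.exp (2 * (π : ℂ) * I * bilC A (fun i => (ν i : ℂ)) u) *
        ∑' k : Fin N → ℤ, appellSummand A d τ u v (fun i => (ν i : ℂ))
          (fun i => (k i : ℂ) + (μ i : ℂ) - (ν i : ℂ)) :=
  rfl

lemma appellSummand_add_nu (ν ℓ m : Fin N → ℂ) :
    appellSummand A d τ u v (fun i => ν i + ℓ i) m =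
      appellSummand A d τ u (fun i => v i + ℓ i * τ) ν m := by
  unfold appellSummand
  rw [bilC_add_left, bilC_add_left, bilC_mul_left]
  congr 2
  ring

end Appell

theorem appellPhi_nu_quasiperiodic_general
    {N M : ℕ}
    (A : Matrix (Fin N) (Fin N) ℤ)
    (d : Fin M → Fin N → ℤ)
    (τ : ℂ) (u v : Fin N → ℂ)
    (μ ν : Fin N → ℝ)
    (ℓd : Fin N → ℤ) :
    appellPhi A d τ u v μ (fun i => ν i + (ℓd i : ℝ)) =
      Complex.exp (2 * (π : ℂ) * I * bilC A (fun i => (ℓd i : ℂ)) u) *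
        appellPhi A d τ u (fun i => v i + (ℓd i : ℂ) * τ) μ ν := by
  have hcast : (fun i => ((ν i + (ℓd i : ℝ) : ℝ) : ℂ)) = fun i => (ν i : ℂ) + (ℓd i : ℂ) := by
    ext i; push_cast; rfl
  have hshift : ∀ k : Fin N → ℤ,
      (fun i => (((k + ℓd) i : ℤ) : ℂ) + (μ i : ℂ) - ((ν i + (ℓd i : ℝ) : ℝ) : ℂ)) =
        fun i => (k i : ℂ) + (μ i : ℂ) - (ν i : ℂ) := by
    intro k; ext i; push_cast [Pi.add_apply]; ring
  rw [appellPhi_eq_tsum_appellSummand, appellPhi_eq_tsum_appellSummand,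
    ← (Equiv.addRight ℓd).tsum_eq]
  simp only [Equiv.coe_addRight, hshift, hcast, appellSummand_add_nu, bilC_add_left, mul_add,
    Complex.exp_add]
  ring

/-- Quasi-periodicity of the generalized Appell function in `ν`: for every `ℓ_d ∈ Λ_d`
(the subgroup of `ℤ^N` generated by `d_1,…,d_M`),
`Φ_{μ,ν+ℓ_d}(τ,u,v,{d_r}) = e^{2πi B(ℓ_d,u)} · Φ_{μ,ν}(τ, u, v+ℓ_d τ, {d_r})`. -/
theorem appellPhi_nu_quasiperiodic
    {N M : ℕ} (hN : 1 ≤ N) (hM : 1 ≤ M) (hMN : M ≤ N)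
    (A : Matrix (Fin N) (Fin N) ℤ) (hAsymm : A.IsSymm)
    (hApos : (A.map ((↑) : ℤ → ℝ)).PosDef)
    (d : Fin M → Fin N → ℤ)
    (hd : LinearIndependent ℝ (fun r => fun i => (d r i : ℝ)))
    (τ : ℂ) (hτ : 0 < τ.im) (u v : Fin N → ℂ)
    (μ ν : Fin N → ℝ)
    (hν : ν ∈ Submodule.span ℝ (Set.range (fun r => fun i => (d r i : ℝ))))
    (ℓd : Fin N → ℤ) (hℓd : ℓd ∈ Submodule.span ℤ (Set.range d)) :
    appellPhi A d τ u v μ (fun i => ν i + (ℓd i : ℝ)) =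
      Complex.exp (2 * (π : ℂ) * I * bilC A (fun i => (ℓd i : ℂ)) u) *
        appellPhi A d τ u (fun i => v i + (ℓd i : ℂ) * τ) μ ν :=
  appellPhi_nu_quasiperiodic_general A d τ u v μ ν ℓd
end

section
/- One-dimensional sign-kernel Appell summation: for μ, ν ∈ ℝ∖ℤ, the family (m,n) ↦ (1/2)(sgn(n+ν) + sgn(m+μ)) · e^{2πiτ((m+μ)²/2 + (m+μ)(n+ν))} over (m,n) ∈ ℤ×ℤ is absolutely summable, and its sum equals Σ_{m∈ℤ} e^{2πiτ((m+μ)²/2 + (m+μ)·{ν})} / (1 − e^{2πiτ(m+μ)}). -/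
open scoped BigOperators Real
open Complex

set_option maxHeartbeats 1600000

private lemma aux_re (τ : ℂ) (r : ℝ) :
    (2 * (π : ℂ) * I * τ * (r : ℂ)).re = -(2 * π * τ.im * r) := by
  simp [Complex.mul_re, Complex.mul_im]
  try ring

private lemma aux_abs_exp (τ : ℂ) (r : ℝ) :
    ‖Complex.exp (2 * (π : ℂ) * I * τ * (r : ℂ))‖ = Real.exp (-(2 * π * τ.im * r)) := by
  rw [Complex.norm_exp, aux_re]

private lemma aux_exp_ne_one (τ : ℂ) (hτ : 0 < τ.im) {a : ℝ} (ha : a ≠ 0) :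
    Complex.exp (2 * (π : ℂ) * I * τ * (a : ℂ)) ≠ 1 := by
  intro h
  have h1 := congrArg (‖·‖) h
  rw [aux_abs_exp, norm_one, Real.exp_eq_one_iff, neg_eq_zero] at h1
  have hπ := Real.pi_pos
  have h2 : (2 : ℝ) * π * τ.im ≠ 0 := by positivity
  exact ha ((mul_eq_zero.mp h1).resolve_left h2)

private lemma aux_norm_exp_lt_one (τ : ℂ) (hτ : 0 < τ.im) {a : ℝ} (ha : 0 < a) :
    ‖Complex.exp (2 * (π : ℂ) * I * τ * (a : ℂ))‖ < 1 := by
  rw [aux_abs_exp, Real.exp_lt_one_iff, neg_lt_zero]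
  have hπ := Real.pi_pos
  positivity

private lemma aux_fract_pos {x : ℝ} (hx : ∀ z : ℤ, x ≠ (z : ℝ)) : 0 < Int.fract x := by
  rcases lt_or_eq_of_le (Int.fract_nonneg x) with h | h
  · exact h
  · exfalso
    apply hx ⌊x⌋
    have h' : x - (⌊x⌋ : ℝ) = 0 := by rw [Int.self_sub_floor, ← h]
    linarith

private lemma aux_dist {x : ℝ} (hx : ∀ z : ℤ, x ≠ (z : ℝ)) (m : ℤ) :
    min (Int.fract x) (1 - Int.fract x) ≤ |(m : ℝ) + x| := by
  have h0 := aux_fract_pos hx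
  have h1 := Int.fract_lt_one x
  have hrep : (m : ℝ) + x = ((m + ⌊x⌋ : ℤ) : ℝ) + Int.fract x := by
    rw [Int.fract]
    push_cast
    ring
  rcases le_or_gt 0 (m + ⌊x⌋) with hj | hj
  · have hj' : (0 : ℝ) ≤ ((m + ⌊x⌋ : ℤ) : ℝ) := by exact_mod_cast hj
    rw [hrep, abs_of_pos (by linarith)]
    calc min (Int.fract x) (1 - Int.fract x) ≤ Int.fract x := min_le_left _ _
    _ ≤ _ := by linarith
  · have hj0 : m + ⌊x⌋ ≤ -1 := by omega
    have hj' : ((m + ⌊x⌋ : ℤ) : ℝ) ≤ -1 := by exact_mod_cast hj0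
    rw [hrep, abs_of_neg (by linarith)]
    calc min (Int.fract x) (1 - Int.fract x) ≤ 1 - Int.fract x := min_le_right _ _
    _ ≤ _ := by linarith

private lemma aux_summable_exp {c : ℝ} (hc : 0 < c) (x : ℝ) :
    Summable fun n : ℤ => Real.exp (-(c * |(n : ℝ) + x|)) := by
  have hkey : ∀ y : ℝ, Summable fun n : ℕ => Real.exp (-(c * |(n : ℝ) - y|)) := by
    intro y
    refine Summable.of_nonneg_of_le (fun n => (Real.exp_pos _).le) (fun n => ?_)
      ((summable_geometric_of_lt_one (r := Real.exp (-c)) (Real.exp_pos _).le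
        (by rw [Real.exp_lt_one_iff]; linarith)).mul_left (Real.exp (c * |y|)))
    rw [← Real.exp_nat_mul, ← Real.exp_add]
    apply Real.exp_le_exp.mpr
    have habs : (n : ℝ) ≤ |(n : ℝ) - y| + |y| := by
      calc (n : ℝ) = |(n : ℝ)| := (Nat.abs_cast n).symm
      _ = |((n : ℝ) - y) + y| := by ring_nf
      _ ≤ _ := abs_add_le _ _
    nlinarith [abs_nonneg ((n : ℝ) - y), abs_nonneg y]
  apply Summable.of_nat_of_neg
  · refine (hkey (-x)).congr fun n => ?_
    push_cast
    rw [sub_neg_eq_add]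
  · refine (hkey x).congr fun n => ?_
    push_cast
    rw [show -(n : ℝ) + x = -((n : ℝ) - x) by ring, abs_neg]

/-- One-dimensional sign-kernel Appell summation: for `μ, ν ∈ ℝ∖ℤ`, the family
`(m,n) ↦ (1/2)(sgn(n+ν) + sgn(m+μ)) · e^{2πiτ((m+μ)²/2 + (m+μ)(n+ν))}` over `ℤ×ℤ` is
absolutely summable, and its sum equals
`Σ_{m∈ℤ} e^{2πiτ((m+μ)²/2 + (m+μ)·{ν})} / (1 − e^{2πiτ(m+μ)})`. -/
theorem one_dim_sign_kernel_appell
    (τ : ℂ) (hτ : 0 < τ.im) (μ ν : ℝ)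
    (hμ : ∀ z : ℤ, μ ≠ (z : ℝ)) (hν : ∀ z : ℤ, ν ≠ (z : ℝ))
    (f : ℤ × ℤ → ℂ)
    (hf : f = fun p =>
      (1 / 2 : ℂ) * ((Real.sign ((p.2 : ℝ) + ν) + Real.sign ((p.1 : ℝ) + μ) : ℝ) : ℂ) *
      Complex.exp (2 * (π : ℂ) * I * τ *
        ((((p.1 : ℝ) + μ : ℝ) : ℂ) ^ 2 / 2 +
          (((p.1 : ℝ) + μ : ℝ) : ℂ) * (((p.2 : ℝ) + ν : ℝ) : ℂ)))) :
    Summable (fun p => ‖f p‖) ∧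
    ∑' p : ℤ × ℤ, f p =
      ∑' m : ℤ, Complex.exp (2 * (π : ℂ) * I * τ *
          ((((m : ℝ) + μ : ℝ) : ℂ) ^ 2 / 2 +
            (((m : ℝ) + μ : ℝ) : ℂ) * ((Int.fract ν : ℝ) : ℂ))) /
        (1 - Complex.exp (2 * (π : ℂ) * I * τ * (((m : ℝ) + μ : ℝ) : ℂ))) := by
  have hπ := Real.pi_pos
  have ht : 0 < τ.im := hτ
  set δ := min (Int.fract μ) (1 - Int.fract μ) with hδdef
  set ε := min (Int.fract ν) (1 - Int.fract ν) with hεdef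
  have hδ : 0 < δ := lt_min (aux_fract_pos hμ) (by linarith [Int.fract_lt_one μ])
  have hε : 0 < ε := lt_min (aux_fract_pos hν) (by linarith [Int.fract_lt_one ν])
  have hδa : ∀ m : ℤ, δ ≤ |(m : ℝ) + μ| := aux_dist hμ
  have hεb : ∀ n : ℤ, ε ≤ |(n : ℝ) + ν| := aux_dist hν
  have ha_ne : ∀ m : ℤ, (m : ℝ) + μ ≠ 0 := by
    intro m h
    exact hμ (-m) (by push_cast; linarith)
  have hb_ne : ∀ n : ℤ, (n : ℝ) + ν ≠ 0 := by
    intro n h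
    exact hν (-n) (by push_cast; linarith)
  have habs_half : ‖(1 / 2 : ℂ)‖ = 1 / 2 := by
    rw [show (1 / 2 : ℂ) = ((1 / 2 : ℝ) : ℂ) by norm_num, Complex.norm_real]
    norm_num
  -- pointwise bound
  have hbound : ∀ p : ℤ × ℤ, ‖f p‖ ≤
      Real.exp (-(π * τ.im * ε * |(p.1 : ℝ) + μ|)) *
        Real.exp (-(π * τ.im * δ * |(p.2 : ℝ) + ν|)) := by
    intro p
    have habs : ‖f p‖ =
        1 / 2 * |Real.sign ((p.2 : ℝ) + ν) + Real.sign ((p.1 : ℝ) + μ)| *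
          Real.exp (-(2 * π * τ.im *
            (((p.1 : ℝ) + μ) ^ 2 / 2 + ((p.1 : ℝ) + μ) * ((p.2 : ℝ) + ν)))) := by
      rw [hf]
      simp only
      have hX : (((p.1 : ℝ) + μ : ℝ) : ℂ) ^ 2 / 2 +
          (((p.1 : ℝ) + μ : ℝ) : ℂ) * (((p.2 : ℝ) + ν : ℝ) : ℂ)
          = ((((p.1 : ℝ) + μ) ^ 2 / 2 + ((p.1 : ℝ) + μ) * ((p.2 : ℝ) + ν) : ℝ) : ℂ) := by
        push_cast
        ring
      rw [hX, norm_mul, norm_mul, aux_abs_exp, Complex.norm_real, Real.norm_eq_abs, habs_half]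
    rw [habs, ← Real.exp_add]
    have hda := hδa p.1
    have hdb := hεb p.2
    rcases (ha_ne p.1).lt_or_gt with haneg | hapos <;>
      rcases (hb_ne p.2).lt_or_gt with hbneg | hbpos
    · -- a < 0, b < 0
      rw [Real.sign_of_neg haneg, Real.sign_of_neg hbneg]
      rw [abs_of_neg haneg] at hda ⊢
      rw [abs_of_neg hbneg] at hdb ⊢
      have key : ε * (-((p.1 : ℝ) + μ)) + δ * (-((p.2 : ℝ) + ν)) ≤
          2 * (((p.1 : ℝ) + μ) * ((p.2 : ℝ) + ν)) := by
        nlinarith [mul_nonneg (by linarith : (0:ℝ) ≤ -((p.1 : ℝ) + μ) - δ)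
            (by linarith : (0:ℝ) ≤ -((p.2 : ℝ) + ν)),
          mul_nonneg (by linarith : (0:ℝ) ≤ -((p.2 : ℝ) + ν) - ε)
            (by linarith : (0:ℝ) ≤ -((p.1 : ℝ) + μ))]
      rw [show |(-1 : ℝ) + -1| = 2 by norm_num, show (1:ℝ)/2 * 2 = 1 by norm_num, one_mul]
      apply Real.exp_le_exp.mpr
      nlinarith [mul_le_mul_of_nonneg_left key (by positivity : (0:ℝ) ≤ π * τ.im),
        mul_nonneg (mul_nonneg hπ.le ht.le) (sq_nonneg ((p.1 : ℝ) + μ))]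
    · -- a < 0, b > 0
      rw [Real.sign_of_neg haneg, Real.sign_of_pos hbpos,
        show |(1 : ℝ) + -1| = 0 by norm_num]
      have : (0:ℝ) < Real.exp (-(π * τ.im * ε * |(p.1 : ℝ) + μ|) +
          -(π * τ.im * δ * |(p.2 : ℝ) + ν|)) := Real.exp_pos _
      nlinarith [Real.exp_pos (-(2 * π * τ.im *
        (((p.1 : ℝ) + μ) ^ 2 / 2 + ((p.1 : ℝ) + μ) * ((p.2 : ℝ) + ν))))]
    · -- a > 0, b < 0
      rw [Real.sign_of_pos hapos, Real.sign_of_neg hbneg,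
        show |(-1 : ℝ) + 1| = 0 by norm_num]
      have : (0:ℝ) < Real.exp (-(π * τ.im * ε * |(p.1 : ℝ) + μ|) +
          -(π * τ.im * δ * |(p.2 : ℝ) + ν|)) := Real.exp_pos _
      nlinarith [Real.exp_pos (-(2 * π * τ.im *
        (((p.1 : ℝ) + μ) ^ 2 / 2 + ((p.1 : ℝ) + μ) * ((p.2 : ℝ) + ν))))]
    · -- a > 0, b > 0
      rw [Real.sign_of_pos hapos, Real.sign_of_pos hbpos]
      rw [abs_of_pos hapos] at hda ⊢
      rw [abs_of_pos hbpos] at hdb ⊢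
      have key : ε * ((p.1 : ℝ) + μ) + δ * ((p.2 : ℝ) + ν) ≤
          2 * (((p.1 : ℝ) + μ) * ((p.2 : ℝ) + ν)) := by
        nlinarith [mul_nonneg (by linarith : (0:ℝ) ≤ ((p.1 : ℝ) + μ) - δ)
            (by linarith : (0:ℝ) ≤ (p.2 : ℝ) + ν),
          mul_nonneg (by linarith : (0:ℝ) ≤ ((p.2 : ℝ) + ν) - ε)
            (by linarith : (0:ℝ) ≤ (p.1 : ℝ) + μ)]
      rw [show |(1 : ℝ) + 1| = 2 by norm_num, show (1:ℝ)/2 * 2 = 1 by norm_num, one_mul]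
      apply Real.exp_le_exp.mpr
      nlinarith [mul_le_mul_of_nonneg_left key (by positivity : (0:ℝ) ≤ π * τ.im),
        mul_nonneg (mul_nonneg hπ.le ht.le) (sq_nonneg ((p.1 : ℝ) + μ))]
  have hsum_abs : Summable (fun p : ℤ × ℤ => ‖f p‖) := by
    have hprod := (aux_summable_exp (mul_pos (mul_pos hπ ht) hε) μ).mul_of_nonneg
      (aux_summable_exp (mul_pos (mul_pos hπ ht) hδ) ν)
      (fun _ => (Real.exp_pos _).le) (fun _ => (Real.exp_pos _).le)
    exact Summable.of_nonneg_of_le (fun p => norm_nonneg _) hbound hprod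
  have hsum : Summable f := by
    apply Summable.of_norm
    simpa using hsum_abs
  -- inner sums
  have hinner : ∀ m : ℤ, HasSum (fun n : ℤ => f (m, n))
      (Complex.exp (2 * (π : ℂ) * I * τ *
          ((((m : ℝ) + μ : ℝ) : ℂ) ^ 2 / 2 +
            (((m : ℝ) + μ : ℝ) : ℂ) * ((Int.fract ν : ℝ) : ℂ))) /
        (1 - Complex.exp (2 * (π : ℂ) * I * τ * (((m : ℝ) + μ : ℝ) : ℂ)))) := by
    intro m
    set a : ℝ := (m : ℝ) + μ with ha_def
    have ha : a ≠ 0 := ha_ne m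
    set z : ℂ := Complex.exp (2 * (π : ℂ) * I * τ * (a : ℂ)) with hz_def
    have hz1 : z ≠ 1 := aux_exp_ne_one τ hτ ha
    have hz0 : z ≠ 0 := Complex.exp_ne_zero _
    have h1z : (1 : ℂ) - z ≠ 0 := sub_ne_zero.mpr (Ne.symm hz1)
    set c : ℝ := Int.fract ν with hc_def
    have hc0 : 0 < c := aux_fract_pos hν
    have hc1 : c < 1 := Int.fract_lt_one ν
    set A : ℂ := Complex.exp (2 * (π : ℂ) * I * τ * ((a : ℂ) ^ 2 / 2 + (a : ℂ) * (c : ℂ)))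
      with hA_def
    rw [← (Equiv.subRight (⌊ν⌋ : ℤ)).hasSum_iff]
    have hGeq : ∀ k : ℤ, f (m, k - ⌊ν⌋) =
        (1 / 2 : ℂ) * ((Real.sign ((k : ℝ) + c) + Real.sign a : ℝ) : ℂ) *
          Complex.exp (2 * (π : ℂ) * I * τ *
            ((a : ℂ) ^ 2 / 2 + (a : ℂ) * (((k : ℝ) + c : ℝ) : ℂ))) := by
      intro k
      have hb : ((k - ⌊ν⌋ : ℤ) : ℝ) + ν = (k : ℝ) + c := by
        rw [hc_def, Int.fract]
        push_cast
        ring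
      rw [hf]
      simp only [hb]
      rfl
    rcases ha.lt_or_gt with haneg | hapos
    · -- a < 0
      have hw : ‖Complex.exp (2 * (π : ℂ) * I * τ * ((-a : ℝ) : ℂ))‖ < 1 :=
        aux_norm_exp_lt_one τ hτ (by linarith)
      have h2 : HasSum (fun k : ℕ => f (m, (-(k + 1) : ℤ) - ⌊ν⌋)) (A / (1 - z)) := by
        have hgeo := (hasSum_geometric_of_norm_lt_one hw).mul_left (-(A * z⁻¹))
        have heq : (fun k : ℕ => f (m, (-(k + 1) : ℤ) - ⌊ν⌋)) =
            fun k : ℕ => -(A * z⁻¹) * Complex.exp (2 * (π : ℂ) * I * τ * ((-a : ℝ) : ℂ)) ^ k := by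
          funext k
          rw [hGeq]
          rw [Real.sign_of_neg (by push_cast; linarith [Nat.cast_nonneg (α := ℝ) k] :
            (((-(k + 1) : ℤ) : ℝ) + c) < 0), Real.sign_of_neg haneg]
          have harg : 2 * (π : ℂ) * I * τ *
              ((a : ℂ) ^ 2 / 2 + (a : ℂ) * ((((-(k + 1) : ℤ) : ℝ) + c : ℝ) : ℂ))
              = (2 * (π : ℂ) * I * τ * ((a : ℂ) ^ 2 / 2 + (a : ℂ) * (c : ℂ))
                  + -(2 * (π : ℂ) * I * τ * (a : ℂ)))
                + (k : ℕ) * (2 * (π : ℂ) * I * τ * ((-a : ℝ) : ℂ)) := by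
            push_cast
            ring
          rw [harg, Complex.exp_add, Complex.exp_add, Complex.exp_neg, Complex.exp_nat_mul]
          rw [← hz_def, ← hA_def]
          push_cast
          ring
        rw [heq]
        refine (show A / (1 - z) = -(A * z⁻¹) *
          (1 - Complex.exp (2 * (π : ℂ) * I * τ * ((-a : ℝ) : ℂ)))⁻¹ from ?_) ▸ hgeo
        have hwz : Complex.exp (2 * (π : ℂ) * I * τ * ((-a : ℝ) : ℂ)) = z⁻¹ := by
          rw [hz_def, ← Complex.exp_neg]
          congr 1
          push_cast
          ring
        rw [hwz]
        have hfact : (1 : ℂ) - z⁻¹ = -(z⁻¹) * (1 - z) := by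
          field_simp
          ring
        exact (calc -(A * z⁻¹) * ((1 : ℂ) - z⁻¹)⁻¹
            = -(A * z⁻¹) * ((-(z⁻¹)) * (1 - z))⁻¹ := by rw [hfact]
          _ = -(A * z⁻¹) * ((-(z⁻¹))⁻¹ * (1 - z)⁻¹) := by rw [mul_inv]
          _ = -(A * z⁻¹) * (-z * (1 - z)⁻¹) := by rw [inv_neg, inv_inv]
          _ = A * (z⁻¹ * z) * (1 - z)⁻¹ := by ring
          _ = A / (1 - z) := by rw [inv_mul_cancel₀ hz0, mul_one, div_eq_mul_inv]).symm
      have h1 : HasSum (fun k : ℕ => f (m, (k : ℤ) - ⌊ν⌋)) 0 := by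
        have heq : (fun k : ℕ => f (m, (k : ℤ) - ⌊ν⌋)) = fun _ : ℕ => (0 : ℂ) := by
          funext k
          rw [hGeq]
          rw [Real.sign_of_pos (by positivity : (0:ℝ) < ((k : ℤ) : ℝ) + c),
            Real.sign_of_neg haneg]
          norm_num
        rw [heq]
        exact hasSum_zero
      have hcomb := HasSum.of_nat_of_neg_add_one
        (f := fun k : ℤ => f (m, k - ⌊ν⌋)) h1 h2
      rw [zero_add] at hcomb
      exact hcomb
    · -- a > 0
      have hw : ‖z‖ < 1 := aux_norm_exp_lt_one τ hτ hapos
      have h1 : HasSum (fun k : ℕ => f (m, (k : ℤ) - ⌊ν⌋)) (A / (1 - z)) := by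
        have hgeo := (hasSum_geometric_of_norm_lt_one hw).mul_left A
        have heq : (fun k : ℕ => f (m, (k : ℤ) - ⌊ν⌋)) = fun k : ℕ => A * z ^ k := by
          funext k
          rw [hGeq]
          rw [Real.sign_of_pos (by positivity : (0:ℝ) < ((k : ℤ) : ℝ) + c),
            Real.sign_of_pos hapos]
          have harg : 2 * (π : ℂ) * I * τ *
              ((a : ℂ) ^ 2 / 2 + (a : ℂ) * ((((k : ℤ) : ℝ) + c : ℝ) : ℂ))
              = 2 * (π : ℂ) * I * τ * ((a : ℂ) ^ 2 / 2 + (a : ℂ) * (c : ℂ))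
                + (k : ℕ) * (2 * (π : ℂ) * I * τ * (a : ℂ)) := by
            push_cast
            ring
          rw [harg, Complex.exp_add, Complex.exp_nat_mul, ← hz_def, ← hA_def]
          norm_num
        rw [heq]
        rwa [div_eq_mul_inv]
      have h2 : HasSum (fun k : ℕ => f (m, (-(k + 1) : ℤ) - ⌊ν⌋)) 0 := by
        have heq : (fun k : ℕ => f (m, (-(k + 1) : ℤ) - ⌊ν⌋)) = fun _ : ℕ => (0 : ℂ) := by
          funext k
          rw [hGeq]
          rw [Real.sign_of_neg (by push_cast; linarith [Nat.cast_nonneg (α := ℝ) k] :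
            (((-(k + 1) : ℤ) : ℝ) + c) < 0), Real.sign_of_pos hapos]
          norm_num
        rw [heq]
        exact hasSum_zero
      have hcomb := HasSum.of_nat_of_neg_add_one
        (f := fun k : ℤ => f (m, k - ⌊ν⌋)) h1 h2
      rw [add_zero] at hcomb
      exact hcomb
  refine ⟨hsum_abs, ?_⟩
  rw [Summable.tsum_prod' hsum (fun m => (hinner m).summable)]
  exact tsum_congr fun m => (hinner m).tsum_eq
end

section
/- Factorization of the holomorphic defect s_{μ,ν}: for μ ∈ ℝ∖ℤ and ν ∈ ℝ∖ℤ with ν > 0, one has Σ_{m∈ℤ} e^{πiτ(m+μ)²} · (e^{2πiτ(m+μ){ν}} − e^{2πiτ(m+μ)ν}) / (1 − e^{2πiτ(m+μ)}) = (Σ_{k∈ℤ} e^{πiτ(k+μ+ν)²}) · (Σ_{j=0}^{⌊ν⌋−1} e^{−πiτ(j+{ν})²}). In particular, this vanishes when 0 < ν < 1. -/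
open scoped BigOperators Real
open Complex

private lemma summable_aux (τ : ℂ) (hτ : 0 < τ.im) (b : ℂ) :
    Summable fun m : ℤ => Complex.exp ((π : ℂ) * I * τ * ((m : ℂ) + b) ^ 2) := by
  have h := ((summable_jacobiTheta₂_term_iff (b * τ) τ).mpr hτ).mul_left
      (Complex.exp ((π : ℂ) * I * τ * b ^ 2))
  refine h.congr fun m => ?_
  rw [jacobiTheta₂_term, ← Complex.exp_add]
  congr 1
  ring

private lemma exp_ne_one_aux (τ : ℂ) (hτ : 0 < τ.im) (x : ℝ) (hx : x ≠ 0) :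
    Complex.exp (2 * (π : ℂ) * I * τ * (x : ℂ)) ≠ 1 := by
  intro h
  have h2 : ‖Complex.exp (2 * (π : ℂ) * I * τ * (x : ℂ))‖ = 1 := by
    rw [h]; simp
  rw [Complex.norm_exp, Real.exp_eq_one_iff] at h2
  have hre : (2 * (π : ℂ) * I * τ * (x : ℂ)).re = -(2 * π * τ.im * x) := by
    simp [Complex.mul_re, Complex.mul_im]
  rw [hre] at h2
  have hπ : (0:ℝ) < π := Real.pi_pos
  have hne : 2 * π * τ.im * x ≠ 0 :=
    mul_ne_zero (mul_ne_zero (mul_ne_zero two_ne_zero hπ.ne') hτ.ne') hx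
  exact hne (by linarith)

private lemma term_eq_aux (τ : ℂ) (a F : ℂ) (n : ℕ)
    (hne : Complex.exp (2 * (π : ℂ) * I * τ * a) ≠ 1) :
    Complex.exp ((π : ℂ) * I * τ * a ^ 2) *
      (Complex.exp (2 * (π : ℂ) * I * τ * a * F) -
        Complex.exp (2 * (π : ℂ) * I * τ * a * ((n : ℂ) + F))) /
      (1 - Complex.exp (2 * (π : ℂ) * I * τ * a)) =
    ∑ j ∈ Finset.range n,
      Complex.exp ((π : ℂ) * I * τ * (a + (j : ℂ) + F) ^ 2) *
        Complex.exp (-((π : ℂ) * I * τ * ((j : ℂ) + F) ^ 2)) := by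
  rw [div_eq_iff (sub_ne_zero.mpr (Ne.symm hne))]
  set x := Complex.exp (2 * (π : ℂ) * I * τ * a) with hx
  set C := Complex.exp ((π : ℂ) * I * τ * a ^ 2 + 2 * (π : ℂ) * I * τ * a * F) with hC
  have hsum : ∀ j ∈ Finset.range n,
      Complex.exp ((π : ℂ) * I * τ * (a + (j : ℂ) + F) ^ 2) *
        Complex.exp (-((π : ℂ) * I * τ * ((j : ℂ) + F) ^ 2)) = C * x ^ j := by
    intro j _
    rw [hC, hx, ← Complex.exp_nat_mul, ← Complex.exp_add, ← Complex.exp_add]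
    congr 1
    ring
  rw [Finset.sum_congr rfl hsum, ← Finset.mul_sum, mul_assoc C]
  have hgeom : (∑ j ∈ Finset.range n, x ^ j) * (1 - x) = 1 - x ^ n := by
    have := geom_sum_mul x n
    linear_combination -this
  rw [hgeom]
  have hxn : C * x ^ n = Complex.exp ((π:ℂ)*I*τ*a^2) *
      Complex.exp (2*(π:ℂ)*I*τ*a*((n:ℂ)+F)) := by
    rw [hC, hx, ← Complex.exp_nat_mul, ← Complex.exp_add, ← Complex.exp_add]
    congr 1; ring
  rw [mul_sub, mul_sub, hxn, hC, Complex.exp_add]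
  ring

/-- Factorization of the holomorphic defect `s_{μ,ν}`: for `μ ∈ ℝ∖ℤ` and `ν ∈ ℝ∖ℤ` with
`ν > 0`, one has
`Σ_{m∈ℤ} e^{πiτ(m+μ)²}·(e^{2πiτ(m+μ){ν}} − e^{2πiτ(m+μ)ν})/(1 − e^{2πiτ(m+μ)})
  = (Σ_{k∈ℤ} e^{πiτ(k+μ+ν)²})·(Σ_{j=0}^{⌊ν⌋−1} e^{−πiτ(j+{ν})²})`,
and in particular the left-hand side vanishes when `0 < ν < 1`. -/
theorem s_mu_nu_factorization
    (τ : ℂ) (hτ : 0 < τ.im) (μ ν : ℝ)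
    (hμ : ∀ z : ℤ, μ ≠ (z : ℝ)) (hν : ∀ z : ℤ, ν ≠ (z : ℝ)) (hνpos : 0 < ν)
    (s : ℂ)
    (hs : s = ∑' m : ℤ, Complex.exp ((π : ℂ) * I * τ * (((m : ℝ) + μ : ℝ) : ℂ) ^ 2) *
        (Complex.exp (2 * (π : ℂ) * I * τ * (((m : ℝ) + μ : ℝ) : ℂ) * ((Int.fract ν : ℝ) : ℂ)) -
          Complex.exp (2 * (π : ℂ) * I * τ * (((m : ℝ) + μ : ℝ) : ℂ) * (ν : ℂ))) /
        (1 - Complex.exp (2 * (π : ℂ) * I * τ * (((m : ℝ) + μ : ℝ) : ℂ)))) :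
    s = (∑' k : ℤ, Complex.exp ((π : ℂ) * I * τ * (((k : ℝ) + μ + ν : ℝ) : ℂ) ^ 2)) *
        (∑ j ∈ Finset.range (⌊ν⌋.toNat),
          Complex.exp (-((π : ℂ) * I * τ * (((j : ℝ) + Int.fract ν : ℝ) : ℂ) ^ 2))) ∧
      (ν < 1 → s = 0) := by
  have hn0 : (0:ℤ) ≤ ⌊ν⌋ := Int.floor_nonneg.mpr hνpos.le
  set n : ℕ := ⌊ν⌋.toNat with hn
  have hnZ : ((n : ℤ) : ℝ) = ((⌊ν⌋ : ℤ) : ℝ) := by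
    rw [hn, Int.toNat_of_nonneg hn0]
  have hνeq : ν = (n : ℝ) + Int.fract ν := by
    have h := Int.floor_add_fract ν
    push_cast at hnZ ⊢
    linarith
  have hνC : ((ν : ℝ) : ℂ) = (n : ℂ) + ((Int.fract ν : ℝ) : ℂ) := by
    exact_mod_cast congrArg (Complex.ofReal) hνeq
  -- abbreviations
  set F : ℂ := ((Int.fract ν : ℝ) : ℂ) with hF
  set T : ℂ := ∑' k : ℤ, Complex.exp ((π : ℂ) * I * τ * (((k : ℝ) + μ + ν : ℝ) : ℂ) ^ 2) with hT
  have key : s = T * ∑ j ∈ Finset.range n,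
      Complex.exp (-((π : ℂ) * I * τ * (((j : ℝ) + Int.fract ν : ℝ) : ℂ) ^ 2)) := by
    rw [hs]
    have hterm : ∀ m : ℤ,
        Complex.exp ((π : ℂ) * I * τ * (((m : ℝ) + μ : ℝ) : ℂ) ^ 2) *
          (Complex.exp (2 * (π : ℂ) * I * τ * (((m : ℝ) + μ : ℝ) : ℂ) * ((Int.fract ν : ℝ) : ℂ)) -
            Complex.exp (2 * (π : ℂ) * I * τ * (((m : ℝ) + μ : ℝ) : ℂ) * (ν : ℂ))) /
          (1 - Complex.exp (2 * (π : ℂ) * I * τ * (((m : ℝ) + μ : ℝ) : ℂ))) =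
        ∑ j ∈ Finset.range n,
          Complex.exp ((π : ℂ) * I * τ * ((((m : ℝ) + μ : ℝ) : ℂ) + (j : ℂ) + F) ^ 2) *
            Complex.exp (-((π : ℂ) * I * τ * (((j : ℝ) + Int.fract ν : ℝ) : ℂ) ^ 2)) := by
      intro m
      have hμm : ((m : ℝ) + μ) ≠ 0 := by
        intro h
        exact hμ (-m) (by push_cast; linarith)
      have h1 := term_eq_aux τ (((m : ℝ) + μ : ℝ) : ℂ) F n
        (exp_ne_one_aux τ hτ _ hμm)
      rw [hνC, ← hF, h1]
      refine Finset.sum_congr rfl fun j _ => ?_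
      congr 2
      rw [hF]
      push_cast
      ring
    rw [tsum_congr hterm]
    have hsumm : ∀ j ∈ Finset.range n, Summable fun m : ℤ =>
        Complex.exp ((π : ℂ) * I * τ * ((((m : ℝ) + μ : ℝ) : ℂ) + (j : ℂ) + F) ^ 2) *
          Complex.exp (-((π : ℂ) * I * τ * (((j : ℝ) + Int.fract ν : ℝ) : ℂ) ^ 2)) := by
      intro j _
      refine ((summable_aux τ hτ ((μ : ℂ) + (j : ℂ) + F)).mul_right
        (Complex.exp (-((π : ℂ) * I * τ * (((j : ℝ) + Int.fract ν : ℝ) : ℂ) ^ 2)))).congr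
        fun m => ?_
      have hb : (m : ℂ) + ((μ : ℂ) + (j : ℂ) + F) = ((((m : ℝ) + μ : ℝ)) : ℂ) + (j : ℂ) + F := by
        push_cast; ring
      rw [hb]
    rw [Summable.tsum_finsetSum hsumm]
    rw [Finset.mul_sum]
    refine Finset.sum_congr rfl fun j hj => ?_
    rw [tsum_mul_right]
    congr 1
    rw [hT]
    have hshift := (Equiv.addRight ((⌊ν⌋ : ℤ) - (j : ℤ))).tsum_eq
      (fun m : ℤ => Complex.exp ((π : ℂ) * I * τ * ((((m : ℝ) + μ : ℝ) : ℂ) + (j : ℂ) + F) ^ 2))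
    rw [← hshift]
    refine tsum_congr fun k => ?_
    simp only [Equiv.coe_addRight]
    have hfa : ((⌊ν⌋ : ℤ) : ℂ) + ((Int.fract ν : ℝ) : ℂ) = (ν : ℂ) := by
      exact_mod_cast congrArg (Complex.ofReal) (Int.floor_add_fract ν)
    have hb : ((((k + ((⌊ν⌋ : ℤ) - (j : ℤ)) : ℤ) : ℝ) + μ : ℝ) : ℂ) + (j : ℂ) + F
        = (((k : ℝ) + μ + ν : ℝ) : ℂ) := by
      rw [hF]
      push_cast at hfa ⊢
      linear_combination hfa
    rw [hb]
  refine ⟨key, fun h1 => ?_⟩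
  have hfl : ⌊ν⌋ = 0 := Int.floor_eq_zero_iff.mpr ⟨hνpos.le, h1⟩
  rw [key]
  have : n = 0 := by rw [hn, hfl]; rfl
  rw [this]
  simp
end
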